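/- arXiv:2012.15369 — 4 statements merged into one kernel-verified Lean document; each statement's English description precedes it below -/
import Mathlib

section
/- Let G be a group, U ⊴ G a normal subgroup of finite index, H ≤ G a subgroup, and a ∈ H. Then ⟨a⟩·(H ∩ U) is a subgroup of H, and the indices satisfy [G : U] = [G : UH] · [H : ⟨a⟩(H ∩ U)] · [⟨a⟩ : ⟨a⟩ ∩ U], where UH = {uh : u ∈ U, h ∈ H} is the subgroup generated by U and H. -/
/-!
Let `Z = ⟨a⟩`. Since `a ∈ H` and `U` is normal, `Z` normalizes `H ∩ U`, so `S = Z ⊔ (H ∩ U)` equals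
`Z (H ∩ U)` as a set, and the second isomorphism theorem applies relative to the normalizer:
`[S : H ∩ U] = [Z : Z ∩ H ∩ U] = [Z : Z ∩ U]`. The formula is then the tower
`U ≤ U ⊔ H ≤ G`, with `[U ⊔ H : U] = [H : H ∩ U]`, refined by the tower `H ∩ U ≤ S ≤ H`.
-/

open Pointwise

namespace Subgroup

variable {G : Type*} [Group G]

theorem relIndex_sup_right_of_le_normalizer {H K : Subgroup G} (hH : H ≤ normalizer (K : Set G)) :
    K.relIndex (H ⊔ K) = K.relIndex H := by
  have := normal_subgroupOf_sup_of_le_normalizer hH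
  rw [← relIndex_subgroupOf (le_refl (H ⊔ K)), subgroupOf_sup le_sup_left le_sup_right,
    relIndex_sup_right, relIndex_subgroupOf le_sup_left]

theorem inf_relIndex_of_le_left {H K L : Subgroup G} (hL : L ≤ H) :
    (H ⊓ K).relIndex L = K.relIndex L := by
  rw [← inf_relIndex_right, inf_right_comm, inf_of_le_right hL, inf_relIndex_left]

end Subgroup

theorem statement3_general {G : Type*} [Group G] (U H : Subgroup G) [U.Normal]
    (a : G) (ha : a ∈ H) :
    ∃ S : Subgroup G,
      (S : Set G) = (Subgroup.zpowers a : Set G) * ((H ⊓ U : Subgroup G) : Set G) ∧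
      S ≤ H ∧
      U.index = (U ⊔ H).index * S.relIndex H * U.relIndex (Subgroup.zpowers a) := by
  set Z := Subgroup.zpowers a
  have hZH : Z ≤ H := Subgroup.zpowers_le.mpr ha
  have hZN : Z ≤ Subgroup.normalizer ((H ⊓ U : Subgroup G) : Set G) :=
    (le_inf (hZH.trans H.le_normalizer) Subgroup.le_normalizer_of_normal).trans
      Subgroup.inf_normalizer_le_normalizer_inf
  have hSH : Z ⊔ H ⊓ U ≤ H := sup_le hZH inf_le_left
  refine ⟨Z ⊔ H ⊓ U, Subgroup.coe_mul_of_left_le_normalizer_right _ _ hZN, hSH, ?_⟩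
  calc U.index = U.relIndex (U ⊔ H) * (U ⊔ H).index :=
        (Subgroup.relIndex_mul_index le_sup_left).symm
    _ = (H ⊓ U).relIndex H * (U ⊔ H).index := by
        rw [Subgroup.relIndex_sup_left, Subgroup.inf_relIndex_left]
    _ = (H ⊓ U).relIndex (Z ⊔ H ⊓ U) * (Z ⊔ H ⊓ U).relIndex H * (U ⊔ H).index := by
        rw [Subgroup.relIndex_mul_relIndex _ _ _ le_sup_right hSH]
    _ = (U ⊔ H).index * (Z ⊔ H ⊓ U).relIndex H * U.relIndex Z := by
        rw [Subgroup.relIndex_sup_right_of_le_normalizer hZN,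
          Subgroup.inf_relIndex_of_le_left hZH]
        ring

/-- For `U ⊴ G` of finite index, `H ≤ G` and `a ∈ H`, the set
`⟨a⟩·(H ∩ U)` is a subgroup of `H` and
`[G : U] = [G : UH] · [H : ⟨a⟩(H ∩ U)] · [⟨a⟩ : ⟨a⟩ ∩ U]`. -/
theorem statement3 {G : Type*} [Group G] (U H : Subgroup G) [U.Normal] [U.FiniteIndex]
    (a : G) (ha : a ∈ H) :
    ∃ S : Subgroup G,
      (S : Set G) = (Subgroup.zpowers a : Set G) * ((H ⊓ U : Subgroup G) : Set G) ∧
      S ≤ H ∧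
      U.index = (U ⊔ H).index * S.relIndex H * U.relIndex (Subgroup.zpowers a) :=
  statement3_general U H a ha
end

section
/- Let G = ⟨a, b ∣ aba = bab⟩ be the trefoil knot group, let φ₂ : G → ℤ/2ℤ be the homomorphism sending both generators a and b to 1, let U₂ = ker φ₂, and let M₂ be the normal closure in G of {a²}. Then M₂ ≤ U₂ and the quotient group U₂/M₂ is isomorphic to the cyclic group ℤ/3ℤ. -/
/-!
Modulo `a²`, the relation `aba = bab` makes `b = (ab) a (ab)⁻¹` an involution too, and a group
generated by two involutions satisfying the braid relation consists of the six words
`1, a, b, ab, ba, aba`. The transpositions `(0 1)`, `(1 2)` of `S₃` satisfy the same relations,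
so `G/M₂` maps onto `S₃` and has exactly six elements. Since `φ₂` is onto, `U₂` has index `2`,
so `U₂/M₂` has prime order `3`.
-/

/-- The single relator `aba(bab)⁻¹` of the trefoil knot group, with `a = of true`,
`b = of false`. -/
def trefoilRels : Set (FreeGroup Bool) :=
  {FreeGroup.of true * FreeGroup.of false * FreeGroup.of true *
    (FreeGroup.of false * FreeGroup.of true * FreeGroup.of false)⁻¹}

/-- The trefoil knot group `⟨a, b ∣ aba = bab⟩`. -/
abbrev TrefoilGroup := PresentedGroup trefoilRels

section BraidInvolutions

variable {H : Type*} [Group H] {a b : H}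

theorem mul_self_eq_one_of_braid (ha : a * a = 1) (hab : a * b * a = b * a * b) :
    b * b = 1 := by
  have hconj : a * b * a * (a * b)⁻¹ = b := by rw [hab]; group
  calc b * b = (a * b * a * (a * b)⁻¹) * (a * b * a * (a * b)⁻¹) := by rw [hconj]
    _ = a * b * (a * a) * (a * b)⁻¹ := by group
    _ = 1 := by rw [ha]; group

def braidWords (a b : H) : Fin 6 → H := ![1, a, b, a * b, b * a, a * b * a]

theorem map_braidWords {H' : Type*} [Group H'] (f : H →* H') (a b : H) :
    f ∘ braidWords a b = braidWords (f a) (f b) := by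
  funext i
  fin_cases i <;> simp [braidWords]

theorem braidWords_surjective (hgen : Subgroup.closure {a, b} = ⊤) (ha : a * a = 1)
    (hab : a * b * a = b * a * b) : Function.Surjective (braidWords a b) := by
  have hb := mul_self_eq_one_of_braid ha hab
  have ha' (x : H) : a * (a * x) = x := by rw [← mul_assoc, ha, one_mul]
  have hb' (x : H) : b * (b * x) = x := by rw [← mul_assoc, hb, one_mul]
  have hab' : b * (a * b) = a * (b * a) := by simpa only [mul_assoc] using hab.symm
  have hab'' (x : H) : b * (a * (b * x)) = a * (b * (a * x)) := by
    simp only [← mul_assoc, hab]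
  have hmul : ∀ x ∈ ({a, b} : Set H), ∀ i, ∃ j, braidWords a b j = x * braidWords a b i := by
    rintro x (rfl | rfl) i <;> fin_cases i <;>
      simp [braidWords, Fin.exists_fin_succ, mul_assoc, ha, hb, ha', hb', hab', hab'']
  intro x
  induction (hgen ▸ Subgroup.mem_top x : x ∈ Subgroup.closure {a, b})
    using Subgroup.closure_induction_left with
  | one => exact ⟨0, rfl⟩
  | mul_left x hx y _ ih =>
    obtain ⟨i, rfl⟩ := ih
    exact hmul x hx i
  | inv_mul_cancel x hx y _ ih =>
    obtain ⟨i, rfl⟩ := ih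
    have hx_inv : x⁻¹ = x := by
      rcases hx with rfl | rfl
      exacts [inv_eq_of_mul_eq_one_left ha, inv_eq_of_mul_eq_one_left hb]
    rw [hx_inv]
    exact hmul x hx i

end BraidInvolutions

theorem MonoidHom.surjective_of_map_eq_ofAdd_one {G : Type*} [Group G] {n : ℕ}
    {f : G →* Multiplicative (ZMod n)} {g : G} (hg : f g = Multiplicative.ofAdd 1) :
    Function.Surjective f := by
  intro y
  refine ⟨g ^ ((Multiplicative.toAdd y).cast : ℤ), ?_⟩
  rw [map_zpow, hg, ← ofAdd_zsmul, zsmul_one, ZMod.intCast_zmod_cast, ofAdd_toAdd]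

theorem PresentedGroup.closure_pair_map_of_eq_top {rels : Set (FreeGroup Bool)} {H : Type*}
    [Group H] {f : PresentedGroup rels →* H} (hf : Function.Surjective f) :
    Subgroup.closure {f (of true), f (of false)} = ⊤ := by
  have hrange : ({of true, of false} : Set (PresentedGroup rels)) = Set.range of := by
    ext; simp [or_comm]
  rw [← Set.image_pair, hrange, ← MonoidHom.map_closure, closure_range_of,
    ← MonoidHom.range_eq_map, MonoidHom.range_eq_top.2 hf]

namespace TrefoilGroup

theorem braid : (PresentedGroup.of true : TrefoilGroup) * .of false * .of true =
    .of false * .of true * .of false := by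
  have h := PresentedGroup.mk_eq_mk_of_mul_inv_mem (rels := trefoilRels) rfl
  simp only [map_mul] at h
  exact h

def toPerm : TrefoilGroup →* Equiv.Perm (Fin 3) :=
  PresentedGroup.toGroup (f := fun x => if x then Equiv.swap 0 1 else Equiv.swap 1 2) <| by
    rintro r rfl
    decide

theorem toPerm_surjective : Function.Surjective toPerm := by
  have h : Function.Surjective (toPerm ∘ braidWords (.of true) (.of false)) := by
    rw [map_braidWords]
    simp only [toPerm, PresentedGroup.toGroup.of]
    decide
  exact h.of_comp

theorem index_normalClosure_sq_of_true :
    (Subgroup.normalClosure {(PresentedGroup.of true : TrefoilGroup) ^ 2}).index = 6 := by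
  set M := Subgroup.normalClosure {(PresentedGroup.of true : TrefoilGroup) ^ 2}
  let π := QuotientGroup.mk' M
  have hA : π (.of true) * π (.of true) = 1 := by
    rw [← map_mul, ← sq, QuotientGroup.mk'_apply, QuotientGroup.eq_one_iff]
    exact Subgroup.subset_normalClosure rfl
  have hAB := congrArg π braid
  simp only [map_mul] at hAB
  have hwords := braidWords_surjective
    (PresentedGroup.closure_pair_map_of_eq_top (QuotientGroup.mk'_surjective M)) hA hAB
  have : Finite (TrefoilGroup ⧸ M) := .of_surjective _ hwords
  have hM_le : M ≤ toPerm.ker := Subgroup.normalClosure_le_normal <| by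
    rintro _ rfl
    simp only [SetLike.mem_coe, MonoidHom.mem_ker, map_pow, toPerm, PresentedGroup.toGroup.of]
    decide
  have hF : Function.Surjective (QuotientGroup.lift M toPerm hM_le) :=
    Function.Surjective.of_comp (g := π) toPerm_surjective
  show Nat.card (TrefoilGroup ⧸ M) = 6
  apply le_antisymm
  · simpa using Nat.card_le_card_of_surjective _ hwords
  · simpa [Fintype.card_perm, Nat.factorial] using Nat.card_le_card_of_surjective _ hF

end TrefoilGroup

theorem statement7_general (φ : TrefoilGroup →* Multiplicative (ZMod 2))
    (hφa : φ (PresentedGroup.of true) = Multiplicative.ofAdd 1) :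
    Subgroup.normalClosure {(PresentedGroup.of true : TrefoilGroup) ^ 2} ≤ φ.ker ∧
    Nonempty
      ((↥φ.ker ⧸ (Subgroup.normalClosure
          {(PresentedGroup.of true : TrefoilGroup) ^ 2}).subgroupOf φ.ker)
        ≃* Multiplicative (ZMod 3)) := by
  set M := Subgroup.normalClosure {(PresentedGroup.of true : TrefoilGroup) ^ 2}
  have hMle : M ≤ φ.ker := Subgroup.normalClosure_le_normal <| by
    rintro _ rfl
    simp only [SetLike.mem_coe, MonoidHom.mem_ker, map_pow, hφa]
    decide
  have hker_index : φ.ker.index = 2 := by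
    rw [Subgroup.index_ker, MonoidHom.range_eq_top.2
      (MonoidHom.surjective_of_map_eq_ofAdd_one hφa)]
    simp
  have hcard : Nat.card (φ.ker ⧸ M.subgroupOf φ.ker) = 3 := by
    have h := Subgroup.relIndex_mul_index hMle
    rw [hker_index, TrefoilGroup.index_normalClosure_sq_of_true] at h
    change M.relIndex φ.ker = 3
    omega
  exact ⟨hMle, ⟨mulEquivOfPrimeCardEq hcard (by simp)⟩⟩

/-- With `φ₂ : G → ℤ/2ℤ` sending both generators to `1`, `U₂ = ker φ₂`
and `M₂` the normal closure of `{a²}`, we have `M₂ ≤ U₂` and `U₂/M₂ ≅ ℤ/3ℤ`. -/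
theorem statement7 (φ : TrefoilGroup →* Multiplicative (ZMod 2))
    (hφa : φ (PresentedGroup.of true) = Multiplicative.ofAdd 1)
    (hφb : φ (PresentedGroup.of false) = Multiplicative.ofAdd 1) :
    Subgroup.normalClosure {(PresentedGroup.of true : TrefoilGroup) ^ 2} ≤ φ.ker ∧
    Nonempty
      ((↥φ.ker ⧸ (Subgroup.normalClosure
          {(PresentedGroup.of true : TrefoilGroup) ^ 2}).subgroupOf φ.ker)
        ≃* Multiplicative (ZMod 3)) :=
  statement7_general φ hφa
end

section
/- Let G = ⟨a, b ∣ aba = bab⟩ be the trefoil knot group, let φ₃ : G → ℤ/3ℤ be the homomorphism sending both generators a and b to 1, let U₃ = ker φ₃, and let M₃ be the normal closure in G of {a³}. Then M₃ ≤ U₃ and the quotient group U₃/M₃ is isomorphic to the quaternion group Q₈ of order 8. -/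
/-!
Modulo `M₃` the trefoil group becomes `⟨a, b ∣ a³ = 1, aba = bab⟩`. There, conjugation by `a`
sends `j = b⁻¹a` to `i = ab⁻¹` and `i` to `ji`; as `a³ = 1`, this three-cycle forces the
quaternion relations on `i, j`, so `⟨a, b ∣ a³, aba = bab⟩` is a quotient of `Q₈ ⋊ C₃` via
`t ↦ a`, `i ↦ ab⁻¹`, `j ↦ b⁻¹a`. Conversely `a ↦ t`, `b ↦ i⁻¹t` maps the trefoil group onto
`Q₈ ⋊ C₃` killing `a³`, so `G/M₃ ≅ Q₈ ⋊ C₃` over `ℤ/3`, and `U₃/M₃` is the kernel `Q₈` of the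
projection to `ℤ/3`.
-/

section GroupRelations

variable {K : Type*} [Group K]

theorem pow_mul_eq_mul_inv_pow {x y : K} (hyx : y⁻¹ * x * y = x⁻¹) (m : ℕ) :
    x ^ m * y = y * (x ^ m)⁻¹ := by
  have hconj : y⁻¹ * x ^ m * y = (x ^ m)⁻¹ := by
    calc y⁻¹ * x ^ m * y = (y⁻¹ * x * y) ^ m := by simpa using (conj_pow (a := y⁻¹)).symm
      _ = (x ^ m)⁻¹ := by rw [hyx, inv_pow]
  rw [← hconj]
  group

variable {t i j : K}

theorem mul_mul_eq_and_of_conj_cycle (ht : t ^ 3 = 1) (hj : t * j * t⁻¹ = i)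
    (hi : t * i * t⁻¹ = j * i) : i * j * i = j ∧ j * i * i * j = 1 := by
  let s := MulAut.conj t
  have hs3 : ∀ x, s (s (s x)) = x := fun x => by
    calc s (s (s x)) = t ^ 3 * x * (t ^ 3)⁻¹ := by
          simp only [s, MulAut.conj_apply, pow_three']; group
      _ = x := by rw [ht]; group
  have hsj : s j = i := hj
  have hsi : s i = j * i := hi
  constructor
  · calc i * j * i = s (s (s j)) := by rw [hsj, hsi, map_mul, hsj, hsi, mul_assoc]
      _ = j := hs3 j
  · have : j * i * i * j * i = i := by
      calc j * i * i * j * i = s (s (s i)) := by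
            simp only [hsi, map_mul, hsj]; group
        _ = i := hs3 i
    simpa using this

theorem quaternion_relations_of_conj_cycle (ht : t ^ 3 = 1) (hj : t * j * t⁻¹ = i)
    (hi : t * i * t⁻¹ = j * i) : i ^ 4 = 1 ∧ j ^ 2 = i ^ 2 ∧ j⁻¹ * i * j = i⁻¹ := by
  obtain ⟨h1, h2⟩ := mul_mul_eq_and_of_conj_cycle ht hj hi
  have hi2 : i ^ 2 = j⁻¹ ^ 2 := by
    calc i ^ 2 = j⁻¹ * (j * i * i * j) * j⁻¹ := by rw [sq]; group
      _ = j⁻¹ ^ 2 := by rw [h2]; group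
  have hj4 : j ^ 4 = 1 := by
    have : i ^ 2 * j * i ^ 2 = j := by
      calc i ^ 2 * j * i ^ 2 = i * (i * j * i) * i := by rw [sq]; group
        _ = j := by rw [h1, h1]
    rw [hi2] at this
    calc j ^ 4 = j ^ 3 * (j⁻¹ ^ 2 * j * j⁻¹ ^ 2) := by rw [this]; group
      _ = 1 := by group
  refine ⟨?_, ?_, ?_⟩
  · rw [show 4 = 2 * 2 from rfl, pow_mul, hi2, ← pow_mul, inv_pow, hj4, inv_one]
  · rw [hi2, inv_pow, eq_inv_iff_mul_eq_one, ← pow_add, hj4]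
  · calc j⁻¹ * i * j = j⁻¹ * (i * j * i) * i⁻¹ := by group
      _ = i⁻¹ := by rw [h1]; group

theorem conj_mul_inv_of_braid {a b : K} (ha : a ^ 3 = 1) (hab : a * b * a = b * a * b) :
    a * (a * b⁻¹) * a⁻¹ = b⁻¹ * a * (a * b⁻¹) := by
  have haa : a * a = a⁻¹ := by rw [eq_inv_iff_mul_eq_one, ← pow_three', ha]
  calc a * (a * b⁻¹) * a⁻¹ = (a * a) * b⁻¹ * a⁻¹ := by group
    _ = (a * b * a)⁻¹ := by rw [haa]; group
    _ = (b * a * b)⁻¹ := by rw [hab]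
    _ = b⁻¹ * (a * a) * b⁻¹ := by rw [haa]; group
    _ = b⁻¹ * a * (a * b⁻¹) := by group

end GroupRelations

section ZModPowers

variable {M : Type*} [Monoid M] {n : ℕ} [NeZero n]

def zmodPowersHom (x : M) (hx : x ^ n = 1) : Multiplicative (ZMod n) →* M where
  toFun k := x ^ k.toAdd.val
  map_one' := by simp
  map_mul' k l := by
    rw [toAdd_mul, ZMod.val_add, ← pow_eq_pow_mod _ hx, pow_add]

@[simp]
theorem zmodPowersHom_apply (x : M) (hx : x ^ n = 1) (k : Multiplicative (ZMod n)) :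
    zmodPowersHom x hx k = x ^ k.toAdd.val := rfl

theorem MonoidHom.ext_mzmod {f g : Multiplicative (ZMod n) →* M}
    (h : f (.ofAdd 1) = g (.ofAdd 1)) : f = g := by
  refine MonoidHom.ext fun k => ?_
  obtain ⟨m, rfl⟩ : ∃ m : ℕ, k = .ofAdd (m • 1) := ⟨k.toAdd.val, by simp⟩
  rw [ofAdd_nsmul, map_pow, map_pow, h]

end ZModPowers

namespace QuaternionGroup

variable {n : ℕ} [NeZero n] {G : Type*} [Group G]

def lift (x y : G) (hx : x ^ (2 * n) = 1) (hy : y ^ 2 = x ^ n) (hyx : y⁻¹ * x * y = x⁻¹) :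
    QuaternionGroup n →* G :=
  let P := zmodPowersHom x hx
  have hPn : P (.ofAdd n) = x ^ n := by
    rw [zmodPowersHom_apply, toAdd_ofAdd, ZMod.val_natCast, Nat.mod_eq_of_lt]
    have := NeZero.pos n
    omega
  have hPy : ∀ k, P k * y = y * (P k)⁻¹ := fun k => pow_mul_eq_mul_inv_pow hyx _
  { toFun := fun
      | a k => P (.ofAdd k)
      | xa k => y * P (.ofAdd k)
    map_one' := map_one P
    map_mul' := by
      rintro (k | k) (l | l)
      · simp [ofAdd_add]
      · simp only [a_mul_xa, sub_eq_neg_add, ofAdd_add, ofAdd_neg, map_mul, map_inv]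
        rw [← mul_assoc _ y, hPy, mul_assoc]
      · simp [ofAdd_add, mul_assoc]
      · simp only [xa_mul_xa, sub_eq_neg_add, ofAdd_add, ofAdd_neg, map_mul, map_inv, hPn]
        have hcomm : Commute (P (.ofAdd k))⁻¹ (x ^ n) := (Commute.pow_pow_self x _ n).inv_left
        rw [mul_assoc y, ← mul_assoc _ y, hPy]
        simp only [← mul_assoc]
        rw [← sq, hy, hcomm.eq] }

theorem lift_a (x y : G) (hx hy hyx) (k : ZMod (2 * n)) :
    lift (n := n) x y hx hy hyx (a k) = x ^ k.val := rfl

theorem lift_xa (x y : G) (hx hy hyx) (k : ZMod (2 * n)) :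
    lift (n := n) x y hx hy hyx (xa k) = y * lift (n := n) x y hx hy hyx (a k) := rfl

@[simp]
theorem lift_a_one (x y : G) (hx hy hyx) : lift (n := n) x y hx hy hyx (a 1) = x := by
  have : 1 < 2 * n := by have := NeZero.pos n; omega
  rw [lift_a, ZMod.val_one_eq_one_mod, Nat.mod_eq_of_lt this, pow_one]

@[simp]
theorem lift_xa_zero (x y : G) (hx hy hyx) : lift (n := n) x y hx hy hyx (xa 0) = y := by
  simp [lift_xa]

theorem hom_ext {f g : QuaternionGroup n →* G} (ha : f (a 1) = g (a 1))
    (hxa : f (xa 0) = g (xa 0)) : f = g := by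
  have hak : ∀ k, f (a k) = g (a k) := fun k => by
    rw [← ZMod.natCast_zmod_val k, ← a_one_pow, map_pow, map_pow, ha]
  refine MonoidHom.ext fun
    | a k => hak k
    | xa k => by rw [← zero_add k, ← xa_mul_a, map_mul, map_mul, hxa, hak]

end QuaternionGroup

open QuaternionGroup

-- Writing `i = a 1` and `j = xa 0`, this is the automorphism `j ↦ i ↦ j * i ↦ j`.
noncomputable def quaternionRotation : MulAut (QuaternionGroup 2) :=
  .ofBijective (lift (xa 1) (a 1) (by decide) (by decide) (by decide)) (by decide)

theorem quaternionRotation_pow_three : quaternionRotation ^ 3 = 1 :=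
  MulEquiv.ext (by decide)

@[simp]
theorem quaternionRotation_a_one : quaternionRotation (a 1) = xa 1 := rfl

@[simp]
theorem quaternionRotation_xa_zero : quaternionRotation (xa 0) = a 1 := rfl

-- `Q₈ ⋊ C₃ ≅ SL(2, 𝔽₃)`.
abbrev BinaryTetrahedralGroup :=
  QuaternionGroup 2 ⋊[zmodPowersHom quaternionRotation quaternionRotation_pow_three]
    Multiplicative (ZMod 3)

namespace BinaryTetrahedralGroup

open SemidirectProduct

variable {K : Type*} [Group K]

noncomputable def lift (t i j : K) (ht : t ^ 3 = 1) (hj : t * j * t⁻¹ = i)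
    (hi : t * i * t⁻¹ = j * i) : BinaryTetrahedralGroup →* K :=
  let rel := quaternion_relations_of_conj_cycle ht hj hi
  let f := QuaternionGroup.lift i j rel.1 rel.2.1 rel.2.2
  have hf : ∀ q, f (quaternionRotation q) = t * f q * t⁻¹ := by
    have := QuaternionGroup.hom_ext (f := f.comp quaternionRotation.toMonoidHom)
      (g := (MulAut.conj t).toMonoidHom.comp f) (by simp [f, lift_xa, hi]) (by simp [f, hj])
    exact fun q => DFunLike.congr_fun this q
  SemidirectProduct.lift f (zmodPowersHom t ht) fun g => by
    refine MonoidHom.ext fun q => ?_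
    simp only [MonoidHom.comp_apply, MulEquiv.coe_toMonoidHom, zmodPowersHom_apply,
      MulAut.conj_apply]
    induction g.toAdd.val generalizing q with
    | zero => simp
    | succ m ih => rw [pow_succ, MulAut.mul_apply, ih, hf, pow_succ]; group

theorem hom_ext {f g : BinaryTetrahedralGroup →* K} (ha : f (inl (a 1)) = g (inl (a 1)))
    (hxa : f (inl (xa 0)) = g (inl (xa 0))) (hr : f (inr (.ofAdd 1)) = g (inr (.ofAdd 1))) :
    f = g :=
  SemidirectProduct.hom_ext (QuaternionGroup.hom_ext ha hxa) (MonoidHom.ext_mzmod hr)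

variable (t i j : K) (ht : t ^ 3 = 1) (hj : t * j * t⁻¹ = i) (hi : t * i * t⁻¹ = j * i)

@[simp]
theorem lift_inl_a_one : lift t i j ht hj hi (inl (a 1)) = i := by simp [lift]

@[simp]
theorem lift_inl_xa_zero : lift t i j ht hj hi (inl (xa 0)) = j := by simp [lift]

@[simp]
theorem lift_inr_ofAdd_one : lift t i j ht hj hi (inr (.ofAdd 1)) = t := by
  simp only [lift, SemidirectProduct.lift_inr, zmodPowersHom_apply]
  exact pow_one t

end BinaryTetrahedralGroup

namespace SemidirectProduct

variable {N H G : Type*} [Group N] [Group H] [Group G] {ψ : H →* MulAut N}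

def leftOfKerRightHom (ρ : G →* N ⋊[ψ] H) : (rightHom.comp ρ).ker →* N where
  toFun u := (ρ u).left
  map_one' := by simp
  map_mul' u v := by
    have hu : (ρ u).right = 1 := u.2
    simp [hu]

theorem ker_leftOfKerRightHom (ρ : G →* N ⋊[ψ] H) :
    (leftOfKerRightHom ρ).ker = ρ.ker.subgroupOf (rightHom.comp ρ).ker := by
  ext u
  have hu : (ρ u).right = 1 := u.2
  simp only [MonoidHom.mem_ker, Subgroup.mem_subgroupOf]
  exact ⟨fun h => SemidirectProduct.ext h hu, fun h => by simp [leftOfKerRightHom, h]⟩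

theorem leftOfKerRightHom_surjective {ρ : G →* N ⋊[ψ] H} (hρ : Function.Surjective ρ) :
    Function.Surjective (leftOfKerRightHom ρ) := fun n => by
  obtain ⟨g, hg⟩ := hρ (inl n)
  exact ⟨⟨g, by simp [hg]⟩, by simp [leftOfKerRightHom, hg]⟩

noncomputable def quotientKerEquivLeft {ρ : G →* N ⋊[ψ] H} (hρ : Function.Surjective ρ)
    {φ : G →* H} (hφ : rightHom.comp ρ = φ) : φ.ker ⧸ ρ.ker.subgroupOf φ.ker ≃* N :=
  hφ ▸ (QuotientGroup.quotientMulEquivOfEq (ker_leftOfKerRightHom ρ).symm).trans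
    (QuotientGroup.quotientKerEquivOfSurjective _ (leftOfKerRightHom_surjective hρ))

end SemidirectProduct

namespace Trefoil

open SemidirectProduct QuaternionGroup

local notation "M₃" => Subgroup.normalClosure {(PresentedGroup.of true : TrefoilGroup) ^ 3}

theorem braid : (PresentedGroup.of true * PresentedGroup.of false * PresentedGroup.of true :
    TrefoilGroup) = PresentedGroup.of false * PresentedGroup.of true * PresentedGroup.of false :=
  mul_inv_eq_one.mp (PresentedGroup.one_of_mem (Set.mem_singleton _))

noncomputable def toBinaryTetrahedral : TrefoilGroup →* BinaryTetrahedralGroup :=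
  PresentedGroup.toGroup
    (f := fun x => if x then inr (.ofAdd 1) else (inl (a 1))⁻¹ * inr (.ofAdd 1))
    (by rintro r rfl; decide)

noncomputable def ofBinaryTetrahedral : BinaryTetrahedralGroup →* TrefoilGroup ⧸ M₃ :=
  let α := QuotientGroup.mk' M₃ (.of true)
  let β := QuotientGroup.mk' M₃ (.of false)
  have hα : α ^ 3 = 1 := by
    rw [← map_pow, QuotientGroup.mk'_apply, QuotientGroup.eq_one_iff]
    exact Subgroup.subset_normalClosure rfl
  have hαβ : α * β * α = β * α * β := by
    simp only [α, β, ← map_mul, braid]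
  BinaryTetrahedralGroup.lift α (α * β⁻¹) (β⁻¹ * α) hα (by group) (conj_mul_inv_of_braid hα hαβ)

@[simp]
theorem toBinaryTetrahedral_of_true :
    toBinaryTetrahedral (.of true) = inr (.ofAdd 1) := PresentedGroup.toGroup.of _

@[simp]
theorem toBinaryTetrahedral_of_false :
    toBinaryTetrahedral (.of false) = (inl (a 1))⁻¹ * inr (.ofAdd 1) :=
  PresentedGroup.toGroup.of _

theorem ofBinaryTetrahedral_comp_toBinaryTetrahedral :
    ofBinaryTetrahedral.comp toBinaryTetrahedral = QuotientGroup.mk' M₃ := by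
  refine PresentedGroup.ext fun
    | true => by simp [ofBinaryTetrahedral]
    | false => by simp [ofBinaryTetrahedral]

theorem ker_toBinaryTetrahedral : toBinaryTetrahedral.ker = M₃ := by
  refine le_antisymm (fun g hg => ?_) (Subgroup.normalClosure_le_normal ?_)
  · rw [← QuotientGroup.ker_mk' M₃, ← ofBinaryTetrahedral_comp_toBinaryTetrahedral,
      MonoidHom.mem_ker, MonoidHom.comp_apply, MonoidHom.mem_ker.mp hg, map_one]
  · rintro _ rfl
    simp only [SetLike.mem_coe, MonoidHom.mem_ker, map_pow, toBinaryTetrahedral_of_true]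
    decide

theorem toBinaryTetrahedral_surjective : Function.Surjective toBinaryTetrahedral := by
  let ρ := QuotientGroup.lift M₃ toBinaryTetrahedral ker_toBinaryTetrahedral.ge
  have hρ : ρ.comp ofBinaryTetrahedral = MonoidHom.id _ := by
    refine BinaryTetrahedralGroup.hom_ext ?_ ?_ ?_
    · simp [ρ, ofBinaryTetrahedral]
    · simp only [ρ, ofBinaryTetrahedral, QuotientGroup.mk'_apply, MonoidHom.coe_comp,
        Function.comp_apply, BinaryTetrahedralGroup.lift_inl_xa_zero, map_mul, map_inv,
        QuotientGroup.lift_mk, toBinaryTetrahedral_of_false, toBinaryTetrahedral_of_true]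
      decide
    · simp [ρ, ofBinaryTetrahedral]
  intro x
  obtain ⟨g, hg⟩ := QuotientGroup.mk'_surjective M₃ (ofBinaryTetrahedral x)
  refine ⟨g, ?_⟩
  calc toBinaryTetrahedral g = ρ (ofBinaryTetrahedral x) := by rw [← hg]; rfl
    _ = x := DFunLike.congr_fun hρ x

end Trefoil

/-- With `φ₃ : G → ℤ/3ℤ` sending both generators to `1`, `U₃ = ker φ₃`
and `M₃` the normal closure of `{a³}`, we have `M₃ ≤ U₃` and `U₃/M₃ ≅ Q₈`,
the quaternion group of order 8. -/
theorem statement8 (φ : TrefoilGroup →* Multiplicative (ZMod 3))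
    (hφa : φ (PresentedGroup.of true) = Multiplicative.ofAdd 1)
    (hφb : φ (PresentedGroup.of false) = Multiplicative.ofAdd 1) :
    Subgroup.normalClosure {(PresentedGroup.of true : TrefoilGroup) ^ 3} ≤ φ.ker ∧
    Nonempty
      ((↥φ.ker ⧸ (Subgroup.normalClosure
          {(PresentedGroup.of true : TrefoilGroup) ^ 3}).subgroupOf φ.ker)
        ≃* QuaternionGroup 2) := by
  have hφ : SemidirectProduct.rightHom.comp Trefoil.toBinaryTetrahedral = φ :=
    PresentedGroup.ext fun
      | true => by simp [hφa]
      | false => by simp [hφb]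
  refine ⟨?_, ⟨(QuotientGroup.quotientMulEquivOfEq (G := φ.ker) ?_).trans
    (SemidirectProduct.quotientKerEquivLeft Trefoil.toBinaryTetrahedral_surjective hφ)⟩⟩
  · rw [← Trefoil.ker_toBinaryTetrahedral, ← hφ]
    exact MonoidHom.ker_le_comap _ SemidirectProduct.rightHom.ker
  · rw [Trefoil.ker_toBinaryTetrahedral]
end

section
/- Let G = ⟨a, b ∣ aba = bab⟩ be the trefoil knot group. Then the commutator subgroup [G, G] equals the subgroup of G generated by the two elements a⁻¹b and a⁻²ba. -/
/-!
This holds in any group generated by two elements `a, b` with `aba = bab`. Put `x = a⁻¹b` and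
`y = a⁻¹xa`. The braid relation gives `axa⁻¹ = y⁻¹x` and `a⁻¹ya = yx⁻¹`, so `H = ⟨x, y⟩` is
normalized by `a`, hence also by `b = ax`, and is normal. Modulo `H` we have `b ≡ a`, so the
quotient is cyclic, hence abelian, and `[G, G] ≤ H`. Conversely `b = (ab)a(ab)⁻¹`, so
`x = [a⁻¹, ab]` is a commutator and `y` is a conjugate of it.
-/

namespace Subgroup

variable {G : Type*} [Group G]

theorem mem_normalizer_closure_of_conj_mem {s : Set G} {g : G}
    (hconj : ∀ x ∈ s, g * x * g⁻¹ ∈ closure s) (hconj_inv : ∀ x ∈ s, g⁻¹ * x * g ∈ closure s) :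
    g ∈ normalizer (closure s : Set G) := by
  rw [mem_normalizer_iff_map_conj_eq, MonoidHom.map_closure]
  refine le_antisymm (closure_le _ |>.mpr ?_) (closure_le _ |>.mpr fun x hx ↦ ?_)
  · rintro _ ⟨x, hx, rfl⟩
    exact hconj x hx
  · rw [← MonoidHom.map_closure]
    exact ⟨g⁻¹ * x * g, hconj_inv x hx, by simp [mul_assoc]⟩

theorem commutator_le_of_closure_pair_eq_top {N : Subgroup G} [N.Normal] {a b : G}
    (hgen : closure {a, b} = ⊤) (hab : a⁻¹ * b ∈ N) : _root_.commutator G ≤ N := by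
  have hcyclic : IsCyclic (G ⧸ N) := by
    refine isCyclic_iff_exists_zpowers_eq_top.mpr ⟨a, ?_⟩
    have hb : (b : G ⧸ N) = a := (QuotientGroup.eq.mpr hab).symm
    rw [← map_top_of_surjective _ (QuotientGroup.mk'_surjective N), ← hgen,
      MonoidHom.map_closure, Set.image_pair]
    simp [hb, zpowers_eq_closure]
  exact Normal.quotient_commutative_iff_commutator_le.mp inferInstance

end Subgroup

section BraidRelation

open Subgroup
open scoped commutatorElement

variable {G : Type*} [Group G] {a b : G}

theorem conj_inv_mul_of_braid (h : a * b * a = b * a * b) :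
    a * (a⁻¹ * b) * a⁻¹ = (a⁻¹ * a⁻¹ * b * a)⁻¹ * (a⁻¹ * b) :=
  calc a * (a⁻¹ * b) * a⁻¹ = a⁻¹ * b⁻¹ * (b * a * b) * a⁻¹ := by group
    _ = a⁻¹ * b⁻¹ * (a * b * a) * a⁻¹ := by rw [h]
    _ = (a⁻¹ * a⁻¹ * b * a)⁻¹ * (a⁻¹ * b) := by group

theorem conj_inv_conj_of_braid (h : a * b * a = b * a * b) :
    a⁻¹ * (a⁻¹ * a⁻¹ * b * a) * a = a⁻¹ * a⁻¹ * b * a * (a⁻¹ * b)⁻¹ :=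
  calc a⁻¹ * (a⁻¹ * a⁻¹ * b * a) * a = a⁻¹ * a⁻¹ * a⁻¹ * (b * a * b) * b⁻¹ * a := by group
    _ = a⁻¹ * a⁻¹ * a⁻¹ * (a * b * a) * b⁻¹ * a := by rw [h]
    _ = a⁻¹ * a⁻¹ * b * a * (a⁻¹ * b)⁻¹ := by group

theorem inv_mul_eq_commutatorElement_of_braid (h : a * b * a = b * a * b) :
    a⁻¹ * b = ⁅a⁻¹, a * b⁆ :=
  calc a⁻¹ * b = a⁻¹ * (b * a * b) * b⁻¹ * a⁻¹ := by group
    _ = a⁻¹ * (a * b * a) * b⁻¹ * a⁻¹ := by rw [h]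
    _ = ⁅a⁻¹, a * b⁆ := by rw [commutatorElement_def]; group

theorem closure_braid_le_commutator (h : a * b * a = b * a * b) :
    closure {a⁻¹ * b, a⁻¹ * a⁻¹ * b * a} ≤ _root_.commutator G := by
  have hx : a⁻¹ * b ∈ _root_.commutator G := by
    rw [inv_mul_eq_commutatorElement_of_braid h, commutator_def]
    exact commutator_mem_commutator (mem_top _) (mem_top _)
  rw [closure_le]
  rintro _ (rfl | rfl)
  · exact hx
  · simpa [mul_assoc] using Normal.conj_mem inferInstance _ hx a⁻¹

theorem closure_braid_normal (hgen : closure {a, b} = ⊤) (h : a * b * a = b * a * b) :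
    (closure {a⁻¹ * b, a⁻¹ * a⁻¹ * b * a}).Normal := by
  set H := closure {a⁻¹ * b, a⁻¹ * a⁻¹ * b * a}
  have hx : a⁻¹ * b ∈ H := subset_closure (.inl rfl)
  have hy : a⁻¹ * a⁻¹ * b * a ∈ H := subset_closure (.inr rfl)
  have ha : a ∈ normalizer (H : Set G) := by
    refine mem_normalizer_closure_of_conj_mem ?_ ?_ <;> rintro _ (rfl | rfl)
    · rw [conj_inv_mul_of_braid h]; exact mul_mem (inv_mem hy) hx
    · convert hx using 1; group
    · convert hy using 1; group
    · rw [conj_inv_conj_of_braid h]; exact mul_mem hy (inv_mem hx)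
  rw [← normalizer_eq_top_iff, eq_top_iff, ← hgen, closure_le, Set.pair_subset_iff]
  refine ⟨ha, ?_⟩
  simpa using mul_mem ha (le_normalizer hx)

theorem commutator_eq_closure_of_braid (hgen : closure {a, b} = ⊤) (h : a * b * a = b * a * b) :
    _root_.commutator G = closure {a⁻¹ * b, a⁻¹ * a⁻¹ * b * a} :=
  have := closure_braid_normal hgen h
  le_antisymm (commutator_le_of_closure_pair_eq_top hgen (subset_closure (.inl rfl)))
    (closure_braid_le_commutator h)

end BraidRelation

namespace TrefoilGroup

theorem closure_of_eq_top :
    Subgroup.closure {(PresentedGroup.of true : TrefoilGroup), PresentedGroup.of false} = ⊤ := by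
  rw [Set.pair_comm, ← Bool.range_eq]
  exact PresentedGroup.closure_range_of _

theorem braid_relation :
    (PresentedGroup.of true : TrefoilGroup) * PresentedGroup.of false * PresentedGroup.of true =
      PresentedGroup.of false * PresentedGroup.of true * PresentedGroup.of false :=
  PresentedGroup.mk_eq_mk_of_mul_inv_mem rfl

end TrefoilGroup

/-- The commutator subgroup of the trefoil knot group is generated by
the two elements `a⁻¹b` and `a⁻²ba`. -/
theorem statement11 :
    commutator TrefoilGroup =
      Subgroup.closure
        {(PresentedGroup.of true : TrefoilGroup)⁻¹ * PresentedGroup.of false,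
         (PresentedGroup.of true : TrefoilGroup)⁻¹ * (PresentedGroup.of true)⁻¹ *
           PresentedGroup.of false * PresentedGroup.of true} :=
  commutator_eq_closure_of_braid TrefoilGroup.closure_of_eq_top TrefoilGroup.braid_relation
end
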